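/- Let (Ω, 𝔉, P) be a probability space, p > 1 a real number, X a nonempty set, c ∈ (0, 1], and for each x ∈ X let F(x) : Ω → ℝ be a random variable with E[|F(x)|^p] < ∞. Define f(x) := E[F(x)], h(x) := f(x) + c·(E[(F(x) − f(x))₊^p])^{1/p}, and φ(x, y, z) := (c/z^{p−1})·E[(F(x) − y)₊^p] + y + c·(p − 1)·p^{−p/(p−1)}·z. Fix ε > 0 and the feasible set S_ε := {(x, y, z) : x ∈ X, y ≥ f(x), z ≥ ε}. Suppose x* minimizes h over X and (x*_ε, y*_ε, z*_ε) minimizes φ over S_ε. Then h(x*_ε) − h(x*) ≤ c·p^{−1/(p−1)}·ε. -/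

import Mathlib

/-!
Write `φ(x, y, z) = y + c·ψ(M(x, y), z)` with `M(x, y) = E[(F(x) − y)₊^p]`
(`upperPartialMoment`) and `ψ(M, z) = M / z^(p−1) + (p−1)·p^(−p/(p−1))·z` (`liftedPenalty`).
The tangent line of `t ↦ t^p` gives `M^(1/p) ≤ ψ(M, z)` for every `z > 0`, with equality at
`z = κ·M^(1/p)`, `κ = p^(1/(p−1))`; and Minkowski's inequality gives
`M(x, f x)^(1/p) ≤ M(x, y)^(1/p) + (y − f x)` for `y ≥ f x`, so with `c ≤ 1` we get
`h(x) ≤ φ(x, y, z)` on `S_ε`. Conversely, the feasible point `(x*, f(x*), κ·M^(1/p) + ε)` has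
`φ ≤ h(x*) + c·p^(−1/(p−1))·ε`, and minimality of `(x*_ε, y*_ε, z*_ε)` chains the two bounds.
-/

open MeasureTheory

namespace Real

theorem rpow_sub_one_mul_le_rpow {p a N : ℝ} (hp : 1 ≤ p) (ha : 0 < a) (hN : 0 ≤ N) :
    a ^ (p - 1) * (p * N - (p - 1) * a) ≤ N ^ p := by
  have hbern := one_add_mul_self_le_rpow_one_add (s := N / a - 1)
    (by linarith [div_nonneg hN ha.le]) hp
  rw [add_sub_cancel, div_rpow hN ha.le, le_div_iff₀ (rpow_pos_of_pos ha p)] at hbern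
  rw [rpow_sub_one ha.ne']
  calc a ^ p / a * (p * N - (p - 1) * a) = (1 + p * (N / a - 1)) * a ^ p := by
        field_simp; ring
    _ ≤ N ^ p := hbern

theorem rpow_one_div_sub_one_rpow_sub_one {p : ℝ} (hp : 1 < p) :
    (p ^ (1 / (p - 1))) ^ (p - 1) = p := by
  rw [one_div, rpow_inv_rpow (by linarith) (by linarith)]

theorem rpow_neg_div_sub_one {p : ℝ} (hp : 1 < p) :
    p ^ (-(p / (p - 1))) = (p * p ^ (1 / (p - 1)))⁻¹ := by
  rw [rpow_neg (by linarith), ← rpow_one_add' (by linarith) (by positivity),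
    one_add_div (by linarith), sub_add_cancel]

end Real

noncomputable def liftedPenalty (p M z : ℝ) : ℝ :=
  M / z ^ (p - 1) + (p - 1) * p ^ (-(p / (p - 1))) * z

section LiftedPenalty

variable {p M : ℝ}

theorem liftedPenalty_eq (hp : 1 < p) (z : ℝ) :
    liftedPenalty p M z = M / z ^ (p - 1) + (p - 1) / (p * p ^ (1 / (p - 1))) * z := by
  rw [liftedPenalty, Real.rpow_neg_div_sub_one hp, div_eq_mul_inv (p - 1)]

theorem rpow_one_div_le_liftedPenalty (hp : 1 < p) (hM : 0 ≤ M) {z : ℝ} (hz : 0 < z) :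
    M ^ (1 / p) ≤ liftedPenalty p M z := by
  set κ := p ^ (1 / (p - 1))
  have hκ : 0 < κ := by positivity
  have htangent := Real.rpow_sub_one_mul_le_rpow hp.le (div_pos hz hκ)
    (Real.rpow_nonneg hM (1 / p))
  rw [one_div, Real.rpow_inv_rpow hM (by positivity), Real.div_rpow hz.le hκ.le,
    Real.rpow_one_div_sub_one_rpow_sub_one hp] at htangent
  have hzp : 0 < z ^ (p - 1) := Real.rpow_pos_of_pos hz _
  have key : liftedPenalty p M z - M ^ p⁻¹
      = (M - z ^ (p - 1) / p * (p * M ^ p⁻¹ - (p - 1) * (z / κ))) / z ^ (p - 1) := by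
    rw [liftedPenalty_eq hp]
    field_simp
    ring
  rw [one_div, ← sub_nonneg, key]
  exact div_nonneg (by linarith) hzp.le

/-- `κ·M^(1/p)` minimizes `liftedPenalty p M`; shifting it by `ε` makes it feasible for
`z ≥ ε` at the cost of at most `(p−1)/(pκ)·ε ≤ ε/κ`. -/
theorem liftedPenalty_le (hp : 1 < p) (hM : 0 ≤ M) {ε : ℝ} (hε : 0 < ε) :
    liftedPenalty p M (p ^ (1 / (p - 1)) * M ^ (1 / p) + ε)
      ≤ M ^ (1 / p) + p ^ (-(1 / (p - 1))) * ε := by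
  have hp0 : 0 < p := by linarith
  set κ := p ^ (1 / (p - 1))
  have hκ : 0 < κ := by positivity
  have hκp : κ ^ (p - 1) = p := Real.rpow_one_div_sub_one_rpow_sub_one hp
  set N := M ^ (1 / p) with hN_def
  have hN : 0 ≤ N := Real.rpow_nonneg hM _
  have hMN : M = N ^ (p - 1) * N := by
    rw [← Real.rpow_add_one' hN (by linarith), sub_add_cancel, hN_def, one_div,
      Real.rpow_inv_rpow hM hp0.ne']
  have hz : 0 < (κ * N + ε) ^ (p - 1) := Real.rpow_pos_of_pos (by positivity) _
  have hpN : p * N ^ (p - 1) ≤ (κ * N + ε) ^ (p - 1) := by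
    calc p * N ^ (p - 1) = (κ * N) ^ (p - 1) := by rw [Real.mul_rpow hκ.le hN, hκp]
      _ ≤ (κ * N + ε) ^ (p - 1) := Real.rpow_le_rpow (by positivity) (by linarith) (by linarith)
  have hfirst : M / (κ * N + ε) ^ (p - 1) ≤ N / p := by
    rw [div_le_div_iff₀ hz hp0, hMN, mul_comm N]
    nlinarith
  have hκN : (p - 1) / (p * κ) * (κ * N) = N - N / p := by field_simp
  have hconst : (p - 1) / (p * κ) ≤ κ⁻¹ := by
    rw [div_le_iff₀ (by positivity)]
    field_simp
    linarith
  rw [liftedPenalty_eq hp, Real.rpow_neg hp0.le]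
  nlinarith

end LiftedPenalty

section UpperPartialMoment

variable {Ω : Type*} [MeasurableSpace Ω]

theorem memLp_ofReal_of_integrable_abs_rpow {P : Measure Ω} {p : ℝ} {F : Ω → ℝ} (hp : 0 < p)
    (hFm : AEStronglyMeasurable F P) (hFp : Integrable (fun ω => |F ω| ^ p) P) :
    MemLp F (ENNReal.ofReal p) P := by
  refine (integrable_norm_rpow_iff hFm (by simpa using hp) ENNReal.ofReal_ne_top).1 ?_
  simpa [ENNReal.toReal_ofReal hp.le] using hFp

theorem eLpNorm_ofReal_eq_ofReal_integral_rpow {P : Measure Ω} {p : ℝ} {g : Ω → ℝ} (hp : 0 < p)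
    (hg : ∀ ω, 0 ≤ g ω) (hgp : MemLp g (ENNReal.ofReal p) P) :
    eLpNorm g (ENNReal.ofReal p) P = ENNReal.ofReal ((∫ ω, g ω ^ p ∂P) ^ (1 / p)) := by
  rw [hgp.eLpNorm_eq_integral_rpow_norm (by simpa using hp) ENNReal.ofReal_ne_top,
    ENNReal.toReal_ofReal hp.le, one_div]
  congr 3 with ω
  rw [Real.norm_of_nonneg (hg ω)]

noncomputable def upperPartialMoment (P : Measure Ω) (p : ℝ) (F : Ω → ℝ) (y : ℝ) : ℝ :=
  ∫ ω, (max (F ω - y) 0) ^ p ∂P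

theorem upperPartialMoment_nonneg (P : Measure Ω) (p : ℝ) (F : Ω → ℝ) (y : ℝ) :
    0 ≤ upperPartialMoment P p F y :=
  integral_nonneg fun _ => Real.rpow_nonneg (le_max_right _ _) _

theorem upperPartialMoment_rpow_le {P : Measure Ω} [IsProbabilityMeasure P] {p : ℝ}
    {F : Ω → ℝ} (hp : 1 ≤ p) (hF : MemLp F (ENNReal.ofReal p) P) {y y' : ℝ} (hyy' : y ≤ y') :
    upperPartialMoment P p F y ^ (1 / p) ≤ upperPartialMoment P p F y' ^ (1 / p) + (y' - y) := by
  have hp0 : 0 < p := by linarith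
  have hpos (t : ℝ) : MemLp (fun ω => max (F ω - t) 0) (ENNReal.ofReal p) P :=
    (hF.sub (memLp_const t)).pos_part
  have hpointwise (ω : Ω) : ‖max (F ω - y) 0‖ ≤ ‖max (F ω - y') 0 + (y' - y)‖ := by
    rw [Real.norm_of_nonneg (le_max_right _ _), Real.norm_of_nonneg (by positivity)]
    exact max_le (by linarith [le_max_left (F ω - y') 0]) (by linarith [le_max_right (F ω - y') 0])
  have hnorm : eLpNorm (fun ω => max (F ω - y) 0) (ENNReal.ofReal p) P
      ≤ eLpNorm (fun ω => max (F ω - y') 0) (ENNReal.ofReal p) P + ENNReal.ofReal (y' - y) :=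
    calc eLpNorm (fun ω => max (F ω - y) 0) (ENNReal.ofReal p) P
        ≤ eLpNorm (fun ω => max (F ω - y') 0 + (y' - y)) (ENNReal.ofReal p) P :=
          eLpNorm_mono hpointwise
      _ ≤ eLpNorm (fun ω => max (F ω - y') 0) (ENNReal.ofReal p) P
            + eLpNorm (fun _ => y' - y) (ENNReal.ofReal p) P :=
          eLpNorm_add_le (hpos y').1 aestronglyMeasurable_const (ENNReal.one_le_ofReal.2 hp)
      _ = eLpNorm (fun ω => max (F ω - y') 0) (ENNReal.ofReal p) P
            + ENNReal.ofReal (y' - y) := by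
          rw [eLpNorm_const' _ (by simpa using hp0) ENNReal.ofReal_ne_top, measure_univ,
            ENNReal.one_rpow, mul_one, Real.enorm_of_nonneg (by linarith)]
  have hnonneg := Real.rpow_nonneg (upperPartialMoment_nonneg P p F y') (1 / p)
  unfold upperPartialMoment at hnonneg ⊢
  rw [eLpNorm_ofReal_eq_ofReal_integral_rpow hp0 (fun ω => le_max_right _ _) (hpos y),
    eLpNorm_ofReal_eq_ofReal_integral_rpow hp0 (fun ω => le_max_right _ _) (hpos y'),
    ← ENNReal.ofReal_add hnonneg (by linarith)] at hnorm
  exact (ENNReal.ofReal_le_ofReal_iff (by positivity)).1 hnorm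

end UpperPartialMoment

theorem stmt_19_general {Ω X : Type*} [MeasurableSpace Ω]
    (P : Measure Ω) [IsProbabilityMeasure P]
    (p : ℝ) (hp : 1 < p) (c : ℝ) (hc : c ∈ Set.Ioc (0 : ℝ) 1)
    (F : X → Ω → ℝ) (hFm : ∀ x, AEStronglyMeasurable (F x) P)
    (hFp : ∀ x, Integrable (fun ω => |F x ω| ^ p) P)
    (f h : X → ℝ) (φ : X → ℝ → ℝ → ℝ)
    (hh : ∀ x, h x = f x + c * (∫ ω, (max (F x ω - f x) 0) ^ p ∂P) ^ (1 / p))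
    (hφ : ∀ x y z, φ x y z = (c / z ^ (p - 1)) * (∫ ω, (max (F x ω - y) 0) ^ p ∂P)
      + y + c * (p - 1) * p ^ (-(p / (p - 1))) * z)
    (ε : ℝ) (hε : 0 < ε)
    (xs : X)
    (xe : X) (ye ze : ℝ) (hye : f xe ≤ ye) (hze : ε ≤ ze)
    (hmin : ∀ x y z, f x ≤ y → ε ≤ z → φ xe ye ze ≤ φ x y z) :
    h xe - h xs ≤ c * p ^ (-(1 / (p - 1))) * ε := by
  obtain ⟨hc, hc1⟩ := hc
  have hh' (x : X) : h x = f x + c * upperPartialMoment P p (F x) (f x) ^ (1 / p) := hh x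
  have hφ' (x : X) (y z : ℝ) :
      φ x y z = y + c * liftedPenalty p (upperPartialMoment P p (F x) y) z := by
    rw [hφ, liftedPenalty, upperPartialMoment]
    ring
  have hxe : h xe ≤ φ xe ye ze := by
    have hshift := upperPartialMoment_rpow_le hp.le
      (memLp_ofReal_of_integrable_abs_rpow (by linarith) (hFm xe) (hFp xe)) hye
    have hyoung := rpow_one_div_le_liftedPenalty hp
      (upperPartialMoment_nonneg P p (F xe) ye) (hε.trans_le hze)
    rw [hh', hφ']
    nlinarith
  have hMs := upperPartialMoment_nonneg P p (F xs) (f xs)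
  set zs := p ^ (1 / (p - 1)) * upperPartialMoment P p (F xs) (f xs) ^ (1 / p) + ε
  have hzs : ε ≤ zs :=
    le_add_of_nonneg_left (mul_nonneg (by positivity) (Real.rpow_nonneg hMs _))
  calc h xe - h xs ≤ φ xs (f xs) zs - h xs := by linarith [hmin xs (f xs) zs le_rfl hzs]
    _ ≤ c * p ^ (-(1 / (p - 1))) * ε := by
      rw [hφ', hh']
      nlinarith [mul_le_mul_of_nonneg_left (liftedPenalty_le hp hMs hε) hc.le]

/-- Approximate optimality of the truncated order-`p` lifted problem: if `x*` minimizes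
`h(x) = f(x) + c·(E[(F(x) − f(x))₊^p])^{1/p}` over `X` and `(x*_ε, y*_ε, z*_ε)` minimizes
`φ(x, y, z) = (c/z^{p−1})·E[(F(x) − y)₊^p] + y + c(p−1)p^{−p/(p−1)}·z` over
`S_ε = {(x, y, z) : y ≥ f(x), z ≥ ε}`, then `h(x*_ε) − h(x*) ≤ c·p^{−1/(p−1)}·ε`. -/
theorem stmt_19 {Ω X : Type*} [MeasurableSpace Ω] [Nonempty X]
    (P : Measure Ω) [IsProbabilityMeasure P]
    (p : ℝ) (hp : 1 < p) (c : ℝ) (hc : c ∈ Set.Ioc (0 : ℝ) 1)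
    (F : X → Ω → ℝ) (hFm : ∀ x, AEStronglyMeasurable (F x) P)
    (hFp : ∀ x, Integrable (fun ω => |F x ω| ^ p) P)
    (f h : X → ℝ) (φ : X → ℝ → ℝ → ℝ)
    (hf : ∀ x, f x = ∫ ω, F x ω ∂P)
    (hh : ∀ x, h x = f x + c * (∫ ω, (max (F x ω - f x) 0) ^ p ∂P) ^ (1 / p))
    (hφ : ∀ x y z, φ x y z = (c / z ^ (p - 1)) * (∫ ω, (max (F x ω - y) 0) ^ p ∂P)
      + y + c * (p - 1) * p ^ (-(p / (p - 1))) * z)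
    (ε : ℝ) (hε : 0 < ε)
    (xs : X) (hxs : ∀ x, h xs ≤ h x)
    (xe : X) (ye ze : ℝ) (hye : f xe ≤ ye) (hze : ε ≤ ze)
    (hmin : ∀ x y z, f x ≤ y → ε ≤ z → φ xe ye ze ≤ φ x y z) :
    h xe - h xs ≤ c * p ^ (-(1 / (p - 1))) * ε :=
  stmt_19_general P p hp c hc F hFm hFp f h φ hh hφ ε hε xs xe ye ze hye hze hmin
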